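/- arXiv:2110.08782 — 4 statements merged into one kernel-verified Lean document; each statement's English description precedes it below -/
import Mathlib

section
/- Let A, B be δ-bounded-difference n×n integer matrices and let C = A ⋆ B be their min-plus product, C_{i,j} = min_k (A_{i,k} + B_{k,j}). If i, i', j, j' satisfy |i-i'| ≤ m and |j-j'| ≤ m, then |C_{i,j} - C_{i',j'}| ≤ 2δm. (The min-plus product of bounded-difference matrices is bounded-difference with the same constant, up to a factor 2 per block step.) -/
/-- A matrix (as a function on `Fin n`) is `δ`-bounded-difference if entries at
adjacent positions (differing by 1 in one coordinate) differ by at most `δ`. -/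
def BDiff {n : ℕ} (δ : ℤ) (A : Fin n → Fin n → ℤ) : Prop :=
  ∀ i j i' j' : Fin n,
    ((i'.val = i.val + 1 ∧ j' = j) ∨ (i' = i ∧ j'.val = j.val + 1)) →
    |A i' j' - A i j| ≤ δ

/-- Representative (first element) of the length-`m` block containing `i`. -/
def rep {n : ℕ} (m : ℕ) (i : Fin n) : Fin n :=
  ⟨m * (i.val / m),
    lt_of_le_of_lt (by rw [Nat.mul_comm]; exact Nat.div_mul_le_self _ _) i.isLt⟩

/-- Min-plus product `C = A ⋆ B`. -/
def minplus {n : ℕ} (A B : Fin n → Fin n → ℤ) (i j : Fin n) : ℤ :=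
  Finset.inf' Finset.univ ⟨i, Finset.mem_univ i⟩ (fun k => A i k + B k j)

/-- Block-approximate min-plus product: minimum over representative indices. -/
def Ctil {n : ℕ} (m : ℕ) (A B : Fin n → Fin n → ℤ) (i j : Fin n) : ℤ :=
  Finset.inf' ((Finset.univ : Finset (Fin n)).filter fun k => m ∣ k.val)
    ⟨⟨0, i.pos⟩, by simp⟩ (fun k => A (rep m i) k + B k (rep m j))

/-- Candidate set `K(i',j')`. -/
def Kset {n : ℕ} (m : ℕ) (δ : ℤ) (A B : Fin n → Fin n → ℤ) (i j : Fin n) :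
    Finset (Fin n) :=
  Finset.univ.filter
    (fun k => m ∣ k.val ∧
      A (rep m i) k + B k (rep m j) ≤ Ctil m A B i j + 8 * δ * m)

/-! Adjacent entries differ by at most `δ`, so by the triangle inequality entries in the same
column (or row) differ by at most `δ` times their distance. A minimiser `k` of `C i' j'` is a
candidate for `C i j`, and moving from `(i', j')` to `(i, j)` changes `A i' k + B k j'` by at most
`δ m + δ m`. -/

theorem abs_sub_le_mul_abs_sub_of_adjacent {n : ℕ} {δ : ℤ} {f : Fin n → ℤ}
    (hf : ∀ a b : Fin n, b.val = a.val + 1 → |f b - f a| ≤ δ) (a b : Fin n) :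
    |f a - f b| ≤ δ * |(a.val : ℤ) - b.val| := by
  have step : ∀ d : ℕ, ∀ a b : Fin n, b.val = a.val + d → |f b - f a| ≤ δ * d := by
    intro d
    induction d with
    | zero =>
      intro a b hab
      simp [Fin.ext (by omega : b.val = a.val)]
    | succ d ih =>
      intro a b hab
      let c : Fin n := ⟨a.val + d, by omega⟩
      calc |f b - f a| ≤ |f b - f c| + |f c - f a| := abs_sub_le _ _ _
        _ ≤ δ + δ * d := add_le_add (hf c b (by simp [c]; omega)) (ih a c rfl)
        _ = δ * (d + 1 : ℕ) := by push_cast; ring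
  rcases le_total a.val b.val with hab | hba
  · have := step (b.val - a.val) a b (by omega)
    rw [Nat.cast_sub hab] at this
    rwa [abs_sub_comm, abs_sub_comm (a.val : ℤ),
      abs_of_nonneg (a := (b.val : ℤ) - a.val) (by omega)]
  · have := step (a.val - b.val) b a (by omega)
    rw [Nat.cast_sub hba] at this
    rwa [abs_of_nonneg (a := (a.val : ℤ) - b.val) (by omega)]

section BDiff

variable {n : ℕ} {δ : ℤ} {A : Fin n → Fin n → ℤ}

theorem BDiff.abs_sub_le_fst (hA : BDiff δ A) (i i' k : Fin n) :
    |A i k - A i' k| ≤ δ * |(i.val : ℤ) - i'.val| :=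
  abs_sub_le_mul_abs_sub_of_adjacent (fun a b hab => hA a k b k (Or.inl ⟨hab, rfl⟩)) i i'

theorem BDiff.abs_sub_le_snd (hA : BDiff δ A) (k j j' : Fin n) :
    |A k j - A k j'| ≤ δ * |(j.val : ℤ) - j'.val| :=
  abs_sub_le_mul_abs_sub_of_adjacent (f := A k)
    (fun a b hab => hA k a k b (Or.inr ⟨rfl, hab⟩)) j j'

theorem BDiff.le_add_fst (hδ : 0 ≤ δ) (hA : BDiff δ A) {m : ℕ} {i i' : Fin n}
    (hi : |(i.val : ℤ) - i'.val| ≤ m) (k : Fin n) : A i k ≤ A i' k + δ * m :=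
  sub_le_iff_le_add'.1 <| (le_abs_self _).trans <|
    (hA.abs_sub_le_fst i i' k).trans (mul_le_mul_of_nonneg_left hi hδ)

theorem BDiff.le_add_snd (hδ : 0 ≤ δ) (hA : BDiff δ A) {m : ℕ} {j j' : Fin n}
    (hj : |(j.val : ℤ) - j'.val| ≤ m) (k : Fin n) : A k j ≤ A k j' + δ * m :=
  sub_le_iff_le_add'.1 <| (le_abs_self _).trans <|
    (hA.abs_sub_le_snd k j j').trans (mul_le_mul_of_nonneg_left hj hδ)

end BDiff

theorem minplus_le_of_le_add {n : ℕ} {A B : Fin n → Fin n → ℤ} {i i' j j' : Fin n}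
    {a b : ℤ} (hA : ∀ k, A i k ≤ A i' k + a) (hB : ∀ k, B k j ≤ B k j' + b) :
    minplus A B i j ≤ minplus A B i' j' + (a + b) := by
  rw [← sub_le_iff_le_add]
  refine Finset.le_inf' _ _ fun k _ => ?_
  have hk : minplus A B i j ≤ A i k + B k j := Finset.inf'_le _ (Finset.mem_univ k)
  linarith [hA k, hB k]

theorem BDiff.minplus_le_add {n : ℕ} {δ : ℤ} (hδ : 0 ≤ δ) {A B : Fin n → Fin n → ℤ}
    (hA : BDiff δ A) (hB : BDiff δ B) {m : ℕ} {i i' j j' : Fin n}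
    (hi : |(i.val : ℤ) - i'.val| ≤ m) (hj : |(j.val : ℤ) - j'.val| ≤ m) :
    minplus A B i j ≤ minplus A B i' j' + 2 * δ * m := by
  have := minplus_le_of_le_add (hA.le_add_fst hδ hi) (hB.le_add_snd hδ hj)
  linarith

/-- the min-plus product of δ-bounded-difference matrices satisfies
`|C i j - C i' j'| ≤ 2δm` whenever `|i - i'| ≤ m` and `|j - j'| ≤ m`. -/
theorem stmt2 {n : ℕ} (δ : ℤ) (hδ : 0 < δ) (A B : Fin n → Fin n → ℤ)
    (hA : BDiff δ A) (hB : BDiff δ B) (m : ℕ) (i i' j j' : Fin n)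
    (hi : |(i.val : ℤ) - (i'.val : ℤ)| ≤ m)
    (hj : |(j.val : ℤ) - (j'.val : ℤ)| ≤ m) :
    |minplus A B i j - minplus A B i' j'| ≤ 2 * δ * m := by
  have h₁ := hA.minplus_le_add hδ.le hB hi hj
  have h₂ := hA.minplus_le_add hδ.le hB (i := i') (j := j')
    (by rwa [abs_sub_comm]) (by rwa [abs_sub_comm])
  exact abs_sub_le_iff.2 ⟨by linarith, by linarith⟩
end

section
/- Let A, B be δ-bounded-difference n×n matrices, C = A ⋆ B their min-plus product, and let C̃_{i,j} = min over representative indices k' (multiples of m, say) of A_{i',k'} + B_{k',j'}, where i', j' are the representatives of the blocks of i, j. Then for all i, j we have C_{i,j} ≤ C̃_{i,j} + 2δm and C̃_{i,j} ≤ C_{i,j} + 4δm; hence |C_{i,j} - C̃_{i,j}| ≤ 4δm. -/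
/-!
Every index lies less than `m` steps above its block representative, so by the bounded
differences, replacing one index of an entry by its representative moves the entry by at most
`δm`. For `C ≤ C̃ + 2δm`, take a representative `k'` realising `C̃` and move `i'`, `j'` back to
`i`, `j`; for `C̃ ≤ C + 4δm`, take `k` realising `C` and replace `i`, `k`, `k`, `j` in
`A i k + B k j` by their representatives.
-/

lemma abs_sub_le_mul_of_adjacent {n : ℕ} {δ : ℤ} {f : Fin n → ℤ}
    (hf : ∀ a b : Fin n, b.val = a.val + 1 → |f b - f a| ≤ δ) (a b : Fin n) (d : ℕ)
    (hab : b.val = a.val + d) : |f b - f a| ≤ δ * d := by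
  induction d generalizing b with
  | zero =>
    obtain rfl : b = a := Fin.ext (by omega)
    simp
  | succ d ih =>
    let c : Fin n := ⟨a.val + d, by omega⟩
    calc |f b - f a| ≤ |f b - f c| + |f c - f a| := abs_sub_le _ _ _
      _ ≤ δ + δ * d := add_le_add (hf c b (by simp [c, hab]; omega)) (ih c rfl)
      _ = δ * ↑(d + 1) := by push_cast; ring

lemma rep_val_add_mod {n : ℕ} (m : ℕ) (a : Fin n) : a.val = (rep m a).val + a.val % m :=
  (Nat.div_add_mod _ _).symm

lemma mem_filter_dvd_rep {n : ℕ} (m : ℕ) (a : Fin n) :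
    rep m a ∈ (Finset.univ : Finset (Fin n)).filter fun k => m ∣ k.val :=
  Finset.mem_filter.2 ⟨Finset.mem_univ _, Dvd.intro _ rfl⟩

section BlockRepresentative

variable {n m : ℕ} {δ : ℤ} {A : Fin n → Fin n → ℤ}

lemma BDiff.transpose (hA : BDiff δ A) : BDiff δ fun i j => A j i := by
  rintro i j i' j' (⟨hi, hj⟩ | ⟨hi, hj⟩)
  exacts [hA j i j' i' (Or.inr ⟨hj, hi⟩), hA j i j' i' (Or.inl ⟨hj, hi⟩)]

lemma BDiff.abs_sub_rep_left_le (hA : BDiff δ A) (hδ : 0 ≤ δ) (hm : 0 < m) (a k : Fin n) :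
    |A a k - A (rep m a) k| ≤ δ * m := by
  calc |A a k - A (rep m a) k| ≤ δ * ↑(a.val % m) :=
        abs_sub_le_mul_of_adjacent (f := fun a => A a k)
          (fun a b h => hA a k b k (Or.inl ⟨h, rfl⟩)) _ _ _ (rep_val_add_mod m a)
    _ ≤ δ * m := by gcongr; exact (Nat.mod_lt _ hm).le

lemma BDiff.abs_sub_rep_right_le (hA : BDiff δ A) (hδ : 0 ≤ δ) (hm : 0 < m) (k a : Fin n) :
    |A k a - A k (rep m a)| ≤ δ * m :=
  hA.transpose.abs_sub_rep_left_le hδ hm a k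

variable {B : Fin n → Fin n → ℤ} (hA : BDiff δ A) (hB : BDiff δ B) (hδ : 0 ≤ δ) (hm : 0 < m)
include hA hB hδ hm

lemma minplus_le_Ctil_add (i j : Fin n) :
    minplus A B i j ≤ Ctil m A B i j + 2 * δ * m := by
  obtain ⟨k, -, hk⟩ := Finset.exists_mem_eq_inf' ⟨rep m i, mem_filter_dvd_rep m i⟩
    (fun k => A (rep m i) k + B k (rep m j))
  have hC : minplus A B i j ≤ A i k + B k j := Finset.inf'_le _ (Finset.mem_univ k)
  have hAi := abs_le.1 (hA.abs_sub_rep_left_le hδ hm i k)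
  have hBj := abs_le.1 (hB.abs_sub_rep_right_le hδ hm k j)
  rw [Ctil, hk]
  linarith

lemma Ctil_le_minplus_add (i j : Fin n) :
    Ctil m A B i j ≤ minplus A B i j + 4 * δ * m := by
  obtain ⟨k, -, hk⟩ := Finset.exists_mem_eq_inf' ⟨i, Finset.mem_univ i⟩
    (fun k => A i k + B k j)
  have hC : Ctil m A B i j ≤ A (rep m i) (rep m k) + B (rep m k) (rep m j) :=
    Finset.inf'_le _ (mem_filter_dvd_rep m k)
  have hAi := abs_le.1 (hA.abs_sub_rep_left_le hδ hm i (rep m k))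
  have hAk := abs_le.1 (hA.abs_sub_rep_right_le hδ hm i k)
  have hBk := abs_le.1 (hB.abs_sub_rep_left_le hδ hm k j)
  have hBj := abs_le.1 (hB.abs_sub_rep_right_le hδ hm (rep m k) j)
  rw [minplus, hk]
  linarith

end BlockRepresentative

/-- the block approximation `C̃` of the min-plus product `C`
satisfies `C ≤ C̃ + 2δm`, `C̃ ≤ C + 4δm`, hence `|C - C̃| ≤ 4δm`. -/
theorem stmt3 {n : ℕ} (δ : ℤ) (hδ : 0 < δ) (A B : Fin n → Fin n → ℤ)
    (hA : BDiff δ A) (hB : BDiff δ B) (m : ℕ) (hm : m ∣ n) (i j : Fin n) :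
    minplus A B i j ≤ Ctil m A B i j + 2 * δ * m ∧
    Ctil m A B i j ≤ minplus A B i j + 4 * δ * m ∧
    |minplus A B i j - Ctil m A B i j| ≤ 4 * δ * m := by
  have hm0 : 0 < m := Nat.pos_of_dvd_of_pos hm i.pos
  have hupper := minplus_le_Ctil_add hA hB hδ.le hm0 i j
  have hlower := Ctil_le_minplus_add hA hB hδ.le hm0 i j
  have hδm : 0 ≤ δ * m := by positivity
  exact ⟨hupper, hlower, abs_le.2 ⟨by linarith, by linarith⟩⟩
end

section
/- With the setup of the candidate sets: for any indices i, j, k₁, k₂ such that the block representatives k₁', k₂' both lie in K(i',j'), we have |(A_{i,k₁} + B_{k₁,j}) - (A_{i,k₂} + B_{k₂,j})| ≤ 16δm. -/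
namespace BDiff

variable {n : ℕ} {δ : ℤ} {A : Fin n → Fin n → ℤ}

theorem swap (hA : BDiff δ A) : BDiff δ (Function.swap A) :=
  fun i j i' j' h => hA j i j' i' (h.symm.imp And.symm And.symm)

theorem abs_sub_le_row (hA : BDiff δ A) (k : Fin n) {d : ℕ} :
    ∀ {i i' : Fin n}, i'.val = i.val + d → |A i' k - A i k| ≤ δ * d := by
  induction d with
  | zero =>
    intro i i' h
    simp [Fin.ext (h.trans (Nat.add_zero _))]
  | succ d ih =>
    intro i i' h
    let mid : Fin n := ⟨i.val + d, by omega⟩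
    have h_first : |A mid k - A i k| ≤ δ * d := ih rfl
    have h_last : |A i' k - A mid k| ≤ δ := hA mid k i' k (Or.inl ⟨by simp [mid]; omega, rfl⟩)
    calc |A i' k - A i k| ≤ |A i' k - A mid k| + |A mid k - A i k| := abs_sub_le _ _ _
      _ ≤ δ * (d + 1 : ℕ) := by push_cast; linarith

theorem abs_sub_le_col (hA : BDiff δ A) (i : Fin n) {d : ℕ} {j j' : Fin n}
    (h : j'.val = j.val + d) : |A i j' - A i j| ≤ δ * d :=
  hA.swap.abs_sub_le_row i h

theorem abs_sub_rep_le (hA : BDiff δ A) (hδ : 0 ≤ δ) {m : ℕ} (hm : 0 < m) (x y : Fin n) :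
    |A x y - A (rep m x) (rep m y)| ≤ 2 * δ * m := by
  calc |A x y - A (rep m x) (rep m y)|
      ≤ |A x y - A (rep m x) y| + |A (rep m x) y - A (rep m x) (rep m y)| := abs_sub_le _ _ _
    _ ≤ δ * (x.val % m : ℕ) + δ * (y.val % m : ℕ) :=
        add_le_add (hA.abs_sub_le_row y (Nat.div_add_mod x.val m).symm)
          (hA.abs_sub_le_col (rep m x) (Nat.div_add_mod y.val m).symm)
    _ ≤ δ * m + δ * m := by gcongr <;> exact (Nat.mod_lt _ hm).le
    _ = 2 * δ * m := by ring

end BDiff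

section Kset

variable {n m : ℕ} {δ : ℤ} {A B : Fin n → Fin n → ℤ} {i j : Fin n}

theorem Ctil_le {k : Fin n} (hk : m ∣ k.val) :
    Ctil m A B i j ≤ A (rep m i) k + B k (rep m j) :=
  Finset.inf'_le _ (by simpa using hk)

theorem abs_sub_le_of_mem_Kset {k₁ k₂ : Fin n} (h₁ : k₁ ∈ Kset m δ A B i j)
    (h₂ : k₂ ∈ Kset m δ A B i j) :
    |(A (rep m i) k₁ + B k₁ (rep m j)) - (A (rep m i) k₂ + B k₂ (rep m j))| ≤ 8 * δ * m := by
  simp only [Kset, Finset.mem_filter, Finset.mem_univ, true_and] at h₁ h₂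
  obtain ⟨hk₁, hle₁⟩ := h₁
  obtain ⟨hk₂, hle₂⟩ := h₂
  have hC₁ : Ctil m A B i j ≤ _ := Ctil_le hk₁
  have hC₂ : Ctil m A B i j ≤ _ := Ctil_le hk₂
  rw [abs_le]
  constructor <;> linarith

end Kset

theorem abs_add_sub_rep_le {n : ℕ} {δ : ℤ} {A B : Fin n → Fin n → ℤ} (hA : BDiff δ A)
    (hB : BDiff δ B) (hδ : 0 ≤ δ) {m : ℕ} (hm : 0 < m) (i j k : Fin n) :
    |(A i k + B k j) - (A (rep m i) (rep m k) + B (rep m k) (rep m j))| ≤ 4 * δ * m :=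
  calc _ = |(A i k - A (rep m i) (rep m k)) + (B k j - B (rep m k) (rep m j))| := by ring_nf
    _ ≤ 2 * δ * m + 2 * δ * m :=
        (abs_add_le _ _).trans (add_le_add (hA.abs_sub_rep_le hδ hm i k) (hB.abs_sub_rep_le hδ hm k j))
    _ = 4 * δ * m := by ring

/-- if the block representatives of `k₁, k₂` both lie in the
candidate set `K(i',j')`, then
`|(A_{i,k₁} + B_{k₁,j}) - (A_{i,k₂} + B_{k₂,j})| ≤ 16δm`. -/
theorem stmt5 {n : ℕ} (δ : ℤ) (hδ : 0 < δ) (A B : Fin n → Fin n → ℤ)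
    (hA : BDiff δ A) (hB : BDiff δ B) (m : ℕ) (hm : m ∣ n) (i j k₁ k₂ : Fin n)
    (h₁ : rep m k₁ ∈ Kset m δ A B i j) (h₂ : rep m k₂ ∈ Kset m δ A B i j) :
    |(A i k₁ + B k₁ j) - (A i k₂ + B k₂ j)| ≤ 16 * δ * m := by
  have hm_pos : 0 < m := Nat.pos_of_dvd_of_pos hm i.pos
  have h_rep := abs_sub_le_of_mem_Kset h₁ h₂
  have h_k₁ := abs_add_sub_rep_le hA hB hδ.le hm_pos i j k₁
  have h_k₂ := abs_add_sub_rep_le hA hB hδ.le hm_pos i j k₂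
  rw [abs_le] at h_rep h_k₁ h_k₂ ⊢
  constructor <;> linarith [h_rep.1, h_rep.2, h_k₁.1, h_k₁.2, h_k₂.1, h_k₂.2]
end

section
/- Polynomial encoding of min-plus product: let A, B be a×b and b×c matrices over ℤ ∪ {+∞} with finite entries in [−M, M]. Define polynomial matrices A(x), B(x) by replacing finite entry v with x^{v+M} and +∞ with 0. Let C(x) = A(x)·B(x) (ordinary matrix product over ℤ[x]). Then for each (i,j), the min-plus product entry (A ⋆ B)_{i,j} is finite iff C(x)_{i,j} ≠ 0, and in that case (A ⋆ B)_{i,j} = (lowest degree of a nonzero term of C(x)_{i,j}) − 2M. -/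
open Polynomial

namespace Polynomial

variable {R : Type*} [Semiring R] [PartialOrder R] [CanonicallyOrderedAdd R]

theorem support_add_of_canonicallyOrderedAdd (p q : R[X]) :
    (p + q).support = p.support ∪ q.support := by
  ext n
  simp only [mem_support_iff, coeff_add, Finset.mem_union, ne_eq, add_eq_zero, not_and_or]

theorem trailingDegree_add_of_canonicallyOrderedAdd (p q : R[X]) :
    (p + q).trailingDegree = min p.trailingDegree q.trailingDegree := by
  rw [trailingDegree, support_add_of_canonicallyOrderedAdd, Finset.min_union]
  rfl

theorem trailingDegree_sum_of_canonicallyOrderedAdd {ι : Type*} (s : Finset ι) (f : ι → R[X]) :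
    (∑ k ∈ s, f k).trailingDegree = s.inf fun k => (f k).trailingDegree := by
  classical
  induction s using Finset.induction_on with
  | empty => simp
  | insert k s hk ih =>
    rw [Finset.sum_insert hk, trailingDegree_add_of_canonicallyOrderedAdd, ih, Finset.inf_insert]

end Polynomial

theorem Finset.inf_add {ι α : Type*} [LinearOrderedAddCommMonoidWithTop α] (s : Finset ι)
    (f : ι → α) (c : α) : s.inf f + c = s.inf fun k => f k + c :=
  apply_inf_eq_inf_comp_of_linearOrder (· + c) (fun _ _ h => add_le_add_left h c) (top_add c)

noncomputable def offsetMonomial (M : ℕ) (v : WithTop ℤ) : ℕ[X] :=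
  WithTop.recTopCoe 0 (fun x : ℤ => X ^ (x + M).toNat) v

theorem trailingDegree_offsetMonomial {M : ℕ} {v : WithTop ℤ}
    (hv : ∀ x : ℤ, v = x → -(M : ℤ) ≤ x) :
    (offsetMonomial M v).trailingDegree.map (Nat.cast : ℕ → ℤ) = v + ((M : ℤ) : WithTop ℤ) := by
  induction v using WithTop.recTopCoe with
  | top => simp [offsetMonomial]
  | coe x =>
    have hx := hv x rfl
    rw [offsetMonomial, WithTop.recTopCoe_coe, trailingDegree_X_pow, ENat.map_natCast,
      Int.toNat_of_nonneg (by omega), WithTop.coe_add]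

theorem trailingDegree_sum_offsetMonomial_mul {ι : Type*} (M : ℕ) (s : Finset ι)
    (f g : ι → WithTop ℤ) (hf : ∀ k (x : ℤ), f k = x → -(M : ℤ) ≤ x)
    (hg : ∀ k (x : ℤ), g k = x → -(M : ℤ) ≤ x) :
    (∑ k ∈ s, offsetMonomial M (f k) * offsetMonomial M (g k)).trailingDegree.map
      (Nat.cast : ℕ → ℤ) = s.inf (fun k => f k + g k) + ((2 * M : ℤ) : WithTop ℤ) := by
  have map_add (d e : ℕ∞) : (d + e).map (Nat.cast : ℕ → ℤ) = d.map Nat.cast + e.map Nat.cast :=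
    ENat.map_add (Nat.castAddMonoidHom ℤ) d e
  rw [trailingDegree_sum_of_canonicallyOrderedAdd,
    Finset.apply_inf_eq_inf_comp_of_linearOrder (ENat.map (Nat.cast : ℕ → ℤ))
      ENat.map_natCast_strictMono.monotone rfl,
    Finset.inf_add]
  refine Finset.inf_congr rfl fun k _ => ?_
  rw [Function.comp_apply, trailingDegree_mul, map_add, trailingDegree_offsetMonomial (hf k),
    trailingDegree_offsetMonomial (hg k), two_mul, WithTop.coe_add]
  abel

theorem stmt15_general (a b c M : ℕ)
    (A : Fin a → Fin b → WithTop ℤ) (B : Fin b → Fin c → WithTop ℤ)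
    (hA : ∀ i k (v : ℤ), A i k = (v : WithTop ℤ) → -(M : ℤ) ≤ v ∧ v ≤ M)
    (hB : ∀ k j (v : ℤ), B k j = (v : WithTop ℤ) → -(M : ℤ) ≤ v ∧ v ≤ M)
    (i : Fin a) (j : Fin c) :
    let enc : WithTop ℤ → Polynomial ℕ :=
      fun v => WithTop.recTopCoe 0 (fun x : ℤ => Polynomial.X ^ (x + M).toNat) v
    let mp : WithTop ℤ := Finset.univ.inf (fun k : Fin b => A i k + B k j)
    let Cx : Polynomial ℕ := ∑ k : Fin b, enc (A i k) * enc (B k j)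
    (mp ≠ ⊤ ↔ Cx ≠ 0) ∧
    (∀ v : ℤ, mp = (v : WithTop ℤ) →
      (Cx.natTrailingDegree : ℤ) - 2 * M = v) := by
  intro enc mp Cx
  have hCx : Cx.trailingDegree.map (Nat.cast : ℕ → ℤ) = mp + ((2 * M : ℤ) : WithTop ℤ) :=
    trailingDegree_sum_offsetMonomial_mul M _ _ _ (fun k x h => (hA i k x h).1)
      (fun k x h => (hB k j x h).1)
  have hCx_eq_zero : Cx = 0 ↔ mp = ⊤ := by
    rw [← trailingDegree_eq_top, ← ENat.map_eq_top_iff (f := (Nat.cast : ℕ → ℤ)), hCx,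
      WithTop.add_eq_top]
    simp only [WithTop.coe_ne_top, or_false]
  refine ⟨not_congr hCx_eq_zero.symm, fun v hv => ?_⟩
  have hCx_ne_zero : Cx ≠ 0 := by simp [hCx_eq_zero, hv]
  rw [hv, trailingDegree_eq_natTrailingDegree hCx_ne_zero, ENat.map_natCast, ← WithTop.coe_add,
    WithTop.coe_inj] at hCx
  omega

/-- polynomial encoding of the min-plus product. Finite entries
`v ∈ [-M, M]` are encoded as `x^{v+M} ∈ ℕ[x]` and `∞` as `0`; with
`C(x) = A(x)·B(x)` the ordinary matrix product, `(A ⋆ B)_{i,j}` is finite iff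
`C(x)_{i,j} ≠ 0`, and then `(A ⋆ B)_{i,j}` equals the lowest degree of a
nonzero term of `C(x)_{i,j}` minus `2M`. -/
theorem stmt15 (a b c M : ℕ) (hM : 0 < M)
    (A : Fin a → Fin b → WithTop ℤ) (B : Fin b → Fin c → WithTop ℤ)
    (hA : ∀ i k (v : ℤ), A i k = (v : WithTop ℤ) → -(M : ℤ) ≤ v ∧ v ≤ M)
    (hB : ∀ k j (v : ℤ), B k j = (v : WithTop ℤ) → -(M : ℤ) ≤ v ∧ v ≤ M)
    (i : Fin a) (j : Fin c) :
    let enc : WithTop ℤ → Polynomial ℕ :=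
      fun v => WithTop.recTopCoe 0 (fun x : ℤ => Polynomial.X ^ (x + M).toNat) v
    let mp : WithTop ℤ := Finset.univ.inf (fun k : Fin b => A i k + B k j)
    let Cx : Polynomial ℕ := ∑ k : Fin b, enc (A i k) * enc (B k j)
    (mp ≠ ⊤ ↔ Cx ≠ 0) ∧
    (∀ v : ℤ, mp = (v : WithTop ℤ) →
      (Cx.natTrailingDegree : ℤ) - 2 * M = v) :=
  stmt15_general a b c M A B hA hB i j
end
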